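/- arXiv:1707.06217 — 5 statements merged into one kernel-verified Lean document; each statement's English description precedes it below -/
import Mathlib

section
/- For any n ≥ 1 and any real r ≥ 0, the number of permutations π of {1,…,n} with at most r inversions satisfies log |B(id, r)| ≤ n·log(1 + r/n) + n. -/
/-!
A permutation is determined by its Lehmer code `c i = #{j > i | π j < π i}`: knowing `π` below
`i`, the value `π i` is the element of rank `c i` among the values still unused. The code sums
to the number of inversions, so the permutations with at most `k ≤ r` inversions inject into
the tuples `c : Fin n → ℕ` with `∑ c ≤ k`. Adding a slack coordinate, these are weak
compositions of `k` into `n + 1` parts, counted by `(n + k).choose n ≤ (n + k) ^ n / n! ≤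
(1 + k / n) ^ n e ^ n`, using `n ^ n / n! ≤ e ^ n`.
-/

/-- The number of inversions of a permutation (Kendall tau distance to the identity). -/
def inversions {n : ℕ} (π : Equiv.Perm (Fin n)) : ℕ :=
  (Finset.univ.filter (fun p : Fin n × Fin n => p.1 < p.2 ∧ π p.2 < π p.1)).card

open Finset Equiv

theorem Finset.eq_of_card_filter_lt_eq {α : Type*} [LinearOrder α] {s : Finset α} {a b : α}
    (ha : a ∈ s) (hb : b ∈ s) (h : #{x ∈ s | x < a} = #{x ∈ s | x < b}) : a = b := by
  have key : ∀ {a b}, a ∈ s → a < b → #{x ∈ s | x < a} < #{x ∈ s | x < b} := by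
    intro a b ha hab
    refine card_lt_card ((ssubset_iff_of_subset ?_).2 ⟨a, by simp [ha, hab], by simp⟩)
    exact monotone_filter_right s fun x _ hx => hx.trans hab
  rcases lt_trichotomy a b with hab | rfl | hab
  · exact absurd h (key ha hab).ne
  · rfl
  · exact absurd h (key hb hab).ne'

theorem Finset.card_piAntidiag_univ (ι : Type*) [Fintype ι] [DecidableEq ι] (k : ℕ) :
    #(piAntidiag (univ : Finset ι) k) = (Fintype.card ι + k - 1).choose k := by
  rw [← map_sym_eq_piAntidiag, card_map, sym_univ, card_univ, Sym.card_sym_eq_choose]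

theorem card_le_choose_of_sum_le {n k : ℕ} {s : Finset (Fin n → ℕ)}
    (hs : ∀ f ∈ s, ∑ i, f i ≤ k) : #s ≤ (n + k).choose n := by
  have hslack : ∀ f ∈ s, (Fin.cons (k - ∑ i, f i) f : Fin (n + 1) → ℕ) ∈ piAntidiag univ k := by
    intro f hf
    simp [Fin.sum_cons, Nat.sub_add_cancel (hs f hf)]
  calc #s ≤ #(piAntidiag (univ : Finset (Fin (n + 1))) k) :=
        card_le_card_of_injOn _ hslack fun f _ g _ hfg => (Fin.cons_inj.1 hfg).2
    _ = (n + k).choose n := by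
        rw [card_piAntidiag_univ, Fintype.card_fin, Nat.add_right_comm, Nat.add_sub_cancel,
          Nat.choose_symm_add]

variable {n : ℕ}

def lehmerCode (π : Perm (Fin n)) (i : Fin n) : ℕ := #{j | i < j ∧ π j < π i}

theorem sum_lehmerCode (π : Perm (Fin n)) : ∑ i, lehmerCode π i = inversions π := by
  simp only [inversions, lehmerCode, card_filter, Fintype.sum_prod_type]

theorem lehmerCode_eq_card_filter_map (π : Perm (Fin n)) (i : Fin n) :
    lehmerCode π i = #{v ∈ (Ici i).map π.toEmbedding | v < π i} := by
  rw [filter_map, card_map, lehmerCode]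
  congr 1
  ext j
  simp only [mem_filter, mem_univ, true_and, mem_Ici, Function.comp_apply, toEmbedding_apply]
  exact ⟨fun h => ⟨h.1.le, h.2⟩, fun h => ⟨h.1.lt_of_ne (by rintro rfl; exact h.2.false), h.2⟩⟩

theorem map_Ici_eq_of_eqOn_Iio {π σ : Perm (Fin n)} {i : Fin n} (h : ∀ j < i, π j = σ j) :
    (Ici i).map π.toEmbedding = (Ici i).map σ.toEmbedding := by
  have key : ∀ {π σ : Perm (Fin n)}, (∀ j < i, π j = σ j) → ∀ v, i ≤ π.symm v → i ≤ σ.symm v := by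
    intro π σ h v hv
    by_contra! hlt
    have : π (σ.symm v) = v := by rw [h _ hlt, apply_symm_apply]
    exact hv.not_gt (by rwa [← this, symm_apply_apply])
  ext v
  simp only [mem_map_equiv, mem_Ici]
  exact ⟨key h v, key (fun j hj => (h j hj).symm) v⟩

theorem lehmerCode_injective : Function.Injective (lehmerCode (n := n)) := by
  intro π σ hcode
  ext i
  induction i using WellFoundedLT.induction with
  | _ i ih =>
    have hmap := map_Ici_eq_of_eqOn_Iio fun j hj => Fin.ext (ih j hj)
    refine congrArg Fin.val (eq_of_card_filter_lt_eq (s := (Ici i).map σ.toEmbedding) ?_ ?_ ?_)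
    · rw [← hmap]; exact mem_map_of_mem _ (mem_Ici.2 le_rfl)
    · exact mem_map_of_mem _ (mem_Ici.2 le_rfl)
    · rw [← lehmerCode_eq_card_filter_map, ← hmap, ← lehmerCode_eq_card_filter_map, hcode]

theorem inversions_one : inversions (1 : Perm (Fin n)) = 0 := by
  rw [inversions, card_eq_zero, filter_eq_empty_iff]
  exact fun _ _ h => h.1.asymm h.2

theorem card_inversions_le_le_choose (k : ℕ) :
    #{π : Perm (Fin n) | inversions π ≤ k} ≤ (n + k).choose n := by
  rw [← card_image_of_injective _ lehmerCode_injective]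
  refine card_le_choose_of_sum_le fun c hc => ?_
  obtain ⟨π, hπ, rfl⟩ := mem_image.1 hc
  simpa [sum_lehmerCode] using hπ

theorem choose_add_le_one_add_div_pow_mul_exp (n k : ℕ) :
    ((n + k).choose n : ℝ) ≤ (1 + k / n) ^ n * Real.exp n := by
  calc ((n + k).choose n : ℝ) ≤ ((n + k : ℕ) : ℝ) ^ n / n.factorial := Nat.choose_le_pow_div n _
    _ = (1 + k / n) ^ n * ((n : ℝ) ^ n / n.factorial) := by
        rcases n.eq_zero_or_pos with rfl | hn
        · simp
        · rw [← mul_div_assoc, ← mul_pow, add_mul, one_mul,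
            div_mul_cancel₀ _ (Nat.cast_ne_zero.2 hn.ne'), Nat.cast_add]
    _ ≤ (1 + k / n) ^ n * Real.exp n := by
        gcongr
        exact Real.pow_div_factorial_le_exp _ (Nat.cast_nonneg n) n

open Classical in
theorem stmt6_general (n : ℕ) (r : ℝ) (hr : 0 ≤ r) :
    Real.log ((Finset.univ.filter
        (fun π : Equiv.Perm (Fin n) => (inversions π : ℝ) ≤ r)).card)
      ≤ n * Real.log (1 + r / n) + n := by
  set k := ⌊r⌋₊
  have hball : #{π : Perm (Fin n) | (inversions π : ℝ) ≤ r} ≤ (n + k).choose n :=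
    (card_le_card fun π hπ => by simpa [k, Nat.le_floor_iff hr] using hπ).trans
      (card_inversions_le_le_choose k)
  have hne : 0 < #{π : Perm (Fin n) | (inversions π : ℝ) ≤ r} :=
    card_pos.2 ⟨1, by simpa [inversions_one] using hr⟩
  calc Real.log #{π : Perm (Fin n) | (inversions π : ℝ) ≤ r}
      ≤ Real.log ((1 + k / n) ^ n * Real.exp n) :=
        Real.log_le_log (by exact_mod_cast hne)
          ((Nat.cast_le.2 hball).trans (choose_add_le_one_add_div_pow_mul_exp n k))
    _ = n * Real.log (1 + k / n) + n := by
        rw [Real.log_mul (by positivity) (Real.exp_ne_zero _), Real.log_pow, Real.log_exp]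
    _ ≤ n * Real.log (1 + r / n) + n := by
        gcongr
        exact Nat.floor_le hr

open Classical in
/-- For `n ≥ 1` and `r ≥ 0`, the number of permutations of `{1,…,n}` with at most `r`
inversions satisfies `log |B(id, r)| ≤ n log(1 + r/n) + n`. -/
theorem stmt6 (n : ℕ) (hn : 1 ≤ n) (r : ℝ) (hr : 0 ≤ r) :
    Real.log ((Finset.univ.filter
        (fun π : Equiv.Perm (Fin n) => (inversions π : ℝ) ≤ r)).card)
      ≤ n * Real.log (1 + r / n) + n :=
  stmt6_general n r hr
end

section
/- For any two permutations π, π' of {1,…,n}, the Kendall tau distance satisfies 2·KT(π, π') ≥ ∑_{i=1}^n |π(i) − π'(i)| (i.e., twice the Kendall tau distance dominates the ℓ¹ (Spearman footrule) distance). -/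
open Finset

lemma filter_lt_card {n : ℕ} (a : Fin n) :
    (univ.filter (fun v : Fin n => v < a)).card = (a : ℕ) := by
  have : (univ.filter (fun v : Fin n => v < a)) = Finset.Iio a := by
    ext v; simp
  rw [this, Fin.card_Iio]

lemma card_pos_lt {n : ℕ} (σ : Equiv.Perm (Fin n)) (i : Fin n) :
    (univ.filter (fun j : Fin n => j < i ∧ σ j < σ i)).card
      + (univ.filter (fun j : Fin n => j < i ∧ σ i < σ j)).card = (i : ℕ) := by
  rw [← filter_lt_card i, ← Finset.filter_filter, ← Finset.filter_filter]
  rw [← Finset.card_filter_add_card_filter_not (s := univ.filter (fun j : Fin n => j < i))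
    (p := fun j => σ j < σ i)]
  congr 1
  apply congrArg Finset.card
  apply Finset.filter_congr
  intro j hj
  simp only [mem_filter, mem_univ, true_and] at hj
  constructor
  · intro h; exact not_lt.mpr (le_of_lt h)
  · intro h
    rcases lt_trichotomy (σ j) (σ i) with h' | h' | h'
    · exact absurd h' h
    · exact absurd (σ.injective h') (ne_of_lt hj)
    · exact h'

lemma card_val_lt {n : ℕ} (σ : Equiv.Perm (Fin n)) (i : Fin n) :
    (univ.filter (fun j : Fin n => j < i ∧ σ j < σ i)).card
      + (univ.filter (fun j : Fin n => i < j ∧ σ j < σ i)).card = ((σ i : ℕ)) := by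
  have hD : (univ.filter (fun j : Fin n => σ j < σ i)).card = ((σ i : ℕ)) := by
    rw [← filter_lt_card (σ i)]
    apply Finset.card_bij' (fun j _ => σ j) (fun v _ => σ.symm v)
    · intro j hj; simp only [mem_filter, mem_univ, true_and] at hj ⊢; exact hj
    · intro v hv; simp only [mem_filter, mem_univ, true_and] at hv ⊢
      simpa using hv
    · intro j _; simp
    · intro v _; simp
  have h1 : univ.filter (fun j : Fin n => j < i ∧ σ j < σ i)
      = (univ.filter (fun j : Fin n => σ j < σ i)).filter (fun j => j < i) := by
    rw [Finset.filter_filter]; apply Finset.filter_congr; intro j _; tauto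
  have h2 : univ.filter (fun j : Fin n => i < j ∧ σ j < σ i)
      = (univ.filter (fun j : Fin n => σ j < σ i)).filter (fun j => ¬ j < i) := by
    rw [Finset.filter_filter]
    apply Finset.filter_congr; intro j _
    constructor
    · intro ⟨h, h'⟩; exact ⟨h', not_lt.mpr (le_of_lt h)⟩
    · intro ⟨h', h⟩
      refine ⟨?_, h'⟩
      rcases lt_trichotomy i j with hc | hc | hc
      · exact hc
      · exact absurd (congrArg σ hc) (ne_of_lt h').symm
      · exact absurd hc h
  rw [h1, h2, Finset.card_filter_add_card_filter_not, hD]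

lemma key_signed {n : ℕ} (σ : Equiv.Perm (Fin n)) (i : Fin n) :
    ((σ i : ℕ) : ℤ) - ((i : ℕ) : ℤ)
      = ((univ.filter (fun j : Fin n => i < j ∧ σ j < σ i)).card : ℤ)
        - ((univ.filter (fun j : Fin n => j < i ∧ σ i < σ j)).card : ℤ) := by
  have h1 := card_pos_lt σ i
  have h2 := card_val_lt σ i
  omega

def NInv {n : ℕ} (σ : Equiv.Perm (Fin n)) : ℕ :=
  (univ.filter (fun p : Fin n × Fin n => p.1 < p.2 ∧ σ p.2 < σ p.1)).card

lemma sum_B {n : ℕ} (σ : Equiv.Perm (Fin n)) :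
    ∑ i : Fin n, (univ.filter (fun j : Fin n => i < j ∧ σ j < σ i)).card = NInv σ := by
  rw [NInv, Finset.card_eq_sum_card_fiberwise (f := fun p : Fin n × Fin n => p.1)
    (t := univ) (fun p _ => mem_univ _)]
  apply Finset.sum_congr rfl
  intro i _
  apply Finset.card_bij' (fun j _ => ((i, j) : Fin n × Fin n)) (fun p _ => p.2)
  · intro j hj; simp only [mem_filter, mem_univ, true_and] at hj ⊢; exact ⟨hj, trivial⟩
  · intro p hp; simp only [mem_filter, mem_univ, true_and] at hp ⊢
    obtain ⟨⟨h1, h2⟩, h3⟩ := hp; subst h3; exact ⟨h1, h2⟩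
  · intro j _; rfl
  · intro p hp; simp only [mem_filter, mem_univ, true_and] at hp
    obtain ⟨_, h3⟩ := hp; subst h3; rfl

lemma sum_A {n : ℕ} (σ : Equiv.Perm (Fin n)) :
    ∑ i : Fin n, (univ.filter (fun j : Fin n => j < i ∧ σ i < σ j)).card = NInv σ := by
  rw [NInv, Finset.card_eq_sum_card_fiberwise (f := fun p : Fin n × Fin n => p.2)
    (t := univ) (fun p _ => mem_univ _)]
  apply Finset.sum_congr rfl
  intro i _
  apply Finset.card_bij' (fun j _ => ((j, i) : Fin n × Fin n)) (fun p _ => p.1)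
  · intro j hj; simp only [mem_filter, mem_univ, true_and] at hj ⊢; exact ⟨hj, trivial⟩
  · intro p hp; simp only [mem_filter, mem_univ, true_and] at hp ⊢
    obtain ⟨⟨h1, h2⟩, h3⟩ := hp; subst h3; exact ⟨h1, h2⟩
  · intro j _; rfl
  · intro p hp; simp only [mem_filter, mem_univ, true_and] at hp
    obtain ⟨_, h3⟩ := hp; subst h3; rfl

lemma footrule_le_two_inv {n : ℕ} (σ : Equiv.Perm (Fin n)) :
    (∑ i : Fin n, |((σ i : ℕ) : ℤ) - ((i : ℕ) : ℤ)|) ≤ 2 * (NInv σ : ℤ) := by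
  calc (∑ i : Fin n, |((σ i : ℕ) : ℤ) - ((i : ℕ) : ℤ)|)
      ≤ ∑ i : Fin n, (((univ.filter (fun j : Fin n => i < j ∧ σ j < σ i)).card : ℤ)
          + ((univ.filter (fun j : Fin n => j < i ∧ σ i < σ j)).card : ℤ)) := by
        apply Finset.sum_le_sum
        intro i _
        rw [key_signed σ i]
        have hb : (0:ℤ) ≤ ((univ.filter (fun j : Fin n => i < j ∧ σ j < σ i)).card : ℤ) :=
          Int.natCast_nonneg _
        have ha : (0:ℤ) ≤ ((univ.filter (fun j : Fin n => j < i ∧ σ i < σ j)).card : ℤ) :=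
          Int.natCast_nonneg _
        rw [abs_sub_le_iff]; constructor <;> omega
    _ = 2 * (NInv σ : ℤ) := by
        rw [Finset.sum_add_distrib, ← Nat.cast_sum, ← Nat.cast_sum, sum_B, sum_A]
        ring

/-- Kendall tau distance between two permutations: the number of discordant pairs. -/
def KT {n : ℕ} (π π' : Equiv.Perm (Fin n)) : ℕ :=
  (Finset.univ.filter (fun p : Fin n × Fin n => p.1 < p.2 ∧
    ((π p.1 < π p.2 ∧ π' p.2 < π' p.1) ∨ (π p.2 < π p.1 ∧ π' p.1 < π' p.2)))).card

lemma perm_lt_iff {n : ℕ} (π' : Equiv.Perm (Fin n)) (a b : Fin n) (h : a < b) :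
    ¬ π' a < π' b → π' b < π' a := by
  intro hn
  rcases lt_trichotomy (π' a) (π' b) with hc | hc | hc
  · exact absurd hc hn
  · exact absurd (π'.injective hc) (ne_of_lt h)
  · exact hc

lemma KT_eq_inv {n : ℕ} (π π' : Equiv.Perm (Fin n)) :
    KT π π' = NInv (π * π'⁻¹) := by
  rw [KT, NInv]
  apply Finset.card_bij'
    (fun p _ => if π' p.1 < π' p.2 then (π' p.1, π' p.2) else (π' p.2, π' p.1))
    (fun q _ => if π'⁻¹ q.1 < π'⁻¹ q.2 then (π'⁻¹ q.1, π'⁻¹ q.2) else (π'⁻¹ q.2, π'⁻¹ q.1))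
  · intro p hp
    simp only [mem_filter, mem_univ, true_and] at hp ⊢
    obtain ⟨hlt, hd⟩ := hp
    split_ifs with h
    · rcases hd with ⟨h1, h2⟩ | ⟨h1, h2⟩
      · exact absurd h (not_lt.mpr (le_of_lt h2))
      · exact ⟨h, by simpa using h1⟩
    · have h' := perm_lt_iff π' _ _ hlt h
      rcases hd with ⟨h1, h2⟩ | ⟨h1, h2⟩
      · exact ⟨h', by simpa using h1⟩
      · exact absurd h2 (not_lt.mpr (le_of_lt h'))
  · intro q hq
    simp only [mem_filter, mem_univ, true_and] at hq ⊢
    obtain ⟨hlt, hd⟩ := hq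
    simp only [Equiv.Perm.mul_apply] at hd
    split_ifs with h
    · refine ⟨h, Or.inr ⟨by simpa using hd, by simpa using hlt⟩⟩
    · have h' := perm_lt_iff π'⁻¹ _ _ hlt h
      refine ⟨h', Or.inl ⟨by simpa using hd, by simpa using hlt⟩⟩
  · intro p hp
    simp only [mem_filter, mem_univ, true_and] at hp
    obtain ⟨hlt, _⟩ := hp
    have hna := not_lt.mpr (le_of_lt hlt)
    split_ifs with h h2 h2 <;> simp_all <;> exact absurd h2 (not_lt.mpr hna)
  · intro q hq
    simp only [mem_filter, mem_univ, true_and] at hq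
    obtain ⟨hlt, _⟩ := hq
    have hna := not_lt.mpr (le_of_lt hlt)
    split_ifs with h h2 h2 <;> simp_all <;> exact absurd h2 (not_lt.mpr hna)

/-- Twice the Kendall tau distance dominates the Spearman footrule (ℓ¹) distance:
`2 KT(π, π') ≥ ∑ i |π(i) − π'(i)|`. -/
theorem stmt8 {n : ℕ} (π π' : Equiv.Perm (Fin n)) :
    (∑ i : Fin n, |((π i : ℕ) : ℤ) - ((π' i : ℕ) : ℤ)|) ≤ 2 * (KT π π' : ℤ) := by
  set σ := π * π'⁻¹ with hσ
  have hsum : (∑ i : Fin n, |((π i : ℕ) : ℤ) - ((π' i : ℕ) : ℤ)|)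
      = ∑ k : Fin n, |((σ k : ℕ) : ℤ) - ((k : ℕ) : ℤ)| := by
    rw [← Equiv.sum_comp π' (fun k => |((σ k : ℕ) : ℤ) - ((k : ℕ) : ℤ)|)]
    apply Finset.sum_congr rfl
    intro i _
    simp [hσ, Equiv.Perm.mul_apply]
  rw [hsum, KT_eq_inv]
  exact footrule_le_two_inv σ
end

section
/- Let B be a fixed subset of ordered pairs, let E be a fixed set of (unordered) edges on n vertices, and let π be a uniformly random permutation of the n vertices with E₂ = π(E) = {(i,j) : (π(i), π(j)) ∈ E}. Suppose B is a product set (block) B = R × C with R and C disjoint subsets of vertices. Then for any integer k ≥ 0 with Pr{|B ∩ E₂| = k} > 0 and any (i,j) ∈ B, Pr{(i,j) ∈ E₂ | |B ∩ E₂| = k} = k/|B|. -/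
/-!
Right multiplication by a permutation `τ` that maps `R` onto `R` and `C` onto `C` preserves the
number of block pairs landing in `E`, and such a `τ` (a product of two swaps, one inside `R` and
one inside `C`, which commute since `R` and `C` are disjoint) can send any pair of the block to any
other. Hence, among the permutations with `k` block pairs in `E`, the number putting a given pair
in `E` is the same for all pairs of the block; double counting the incidences gives `k / |B|`.
-/

open Finset

theorem card_mul_eq_card_mul_of_card_filter_eq {ι κ : Type*} (D : Finset ι) (B : Finset κ)
    (r : ι → κ → Prop) [∀ x y, Decidable (r x y)] (k c : ℕ)
    (hD : ∀ x ∈ D, #(B.filter (r x)) = k) (hB : ∀ y ∈ B, #(D.filter (r · y)) = c) :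
    c * #B = k * #D := by
  have hsum := sum_card_bipartiteAbove_eq_sum_card_bipartiteBelow (s := D) (t := B) r
  simp only [bipartiteAbove, bipartiteBelow] at hsum
  rw [sum_congr rfl hD, sum_congr rfl hB, sum_const, sum_const, smul_eq_mul,
    smul_eq_mul] at hsum
  linarith

theorem card_filter_div_card_eq_of_card_filter_eq {ι κ : Type*} (D : Finset ι) (B : Finset κ)
    (r : ι → κ → Prop) [∀ x y, Decidable (r x y)] (k : ℕ) {y₀ : κ} (hy₀ : y₀ ∈ B)
    (hDne : D.Nonempty) (hD : ∀ x ∈ D, #(B.filter (r x)) = k)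
    (hB : ∀ y ∈ B, #(D.filter (r · y)) = #(D.filter (r · y₀))) :
    (#(D.filter (r · y₀)) : ℝ) / #D = k / #B := by
  have hcard := card_mul_eq_card_mul_of_card_filter_eq D B r k _ hD hB
  have hDpos : (0 : ℝ) < #D := by exact_mod_cast hDne.card_pos
  have hBpos : (0 : ℝ) < #B := by exact_mod_cast card_pos.mpr ⟨y₀, hy₀⟩
  rw [div_eq_div_iff hDpos.ne' hBpos.ne']
  exact_mod_cast hcard

theorem card_filter_comp_eq {β : Type*} (s : Finset β) (σ : β ≃ β)
    (hσ : ∀ x, σ x ∈ s ↔ x ∈ s) (P : β → Prop) [DecidablePred P] :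
    #(s.filter (fun x => P (σ x))) = #(s.filter P) :=
  card_equiv σ fun x => by simp only [mem_filter, hσ]

theorem Equiv.swap_apply_mem_iff {α : Type*} [DecidableEq α] {s : Finset α} {x y z : α}
    (h : x ∈ s ↔ y ∈ s) : Equiv.swap x y z ∈ s ↔ z ∈ s := by
  rw [Equiv.swap_apply_def]
  split_ifs with hx hy <;> simp_all

section Block

variable {α : Type*} [DecidableEq α]

theorem exists_perm_block_invariant {R C : Finset α} (hRC : Disjoint R C) {i a j b : α}
    (hi : i ∈ R) (ha : a ∈ R) (hj : j ∈ C) (hb : b ∈ C) :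
    ∃ τ : Equiv.Perm α, τ i = a ∧ τ j = b ∧
      (∀ x, τ x ∈ R ↔ x ∈ R) ∧ (∀ x, τ x ∈ C ↔ x ∈ C) := by
  have hiC : i ∉ C := disjoint_left.mp hRC hi
  have hbR : b ∉ R := disjoint_right.mp hRC hb
  refine ⟨Equiv.swap i a * Equiv.swap j b, ?_, ?_, fun x => ?_, fun x => ?_⟩
  · simp [Equiv.swap_apply_of_ne_of_ne (ne_of_mem_of_not_mem hj hiC).symm
      (ne_of_mem_of_not_mem hb hiC).symm]
  · simp [Equiv.swap_apply_of_ne_of_ne (ne_of_mem_of_not_mem hi hbR).symm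
      (ne_of_mem_of_not_mem ha hbR).symm]
  · simp only [Equiv.Perm.mul_apply]
    rw [Equiv.swap_apply_mem_iff (iff_of_true hi ha),
      Equiv.swap_apply_mem_iff (iff_of_false (disjoint_right.mp hRC hj) hbR)]
  · simp only [Equiv.Perm.mul_apply]
    rw [Equiv.swap_apply_mem_iff (iff_of_false hiC (disjoint_left.mp hRC ha)),
      Equiv.swap_apply_mem_iff (iff_of_true hj hb)]

theorem card_block_filter_mul_eq (E : Finset (α × α)) {R C : Finset α} (π τ : Equiv.Perm α)
    (hR : ∀ x, τ x ∈ R ↔ x ∈ R) (hC : ∀ x, τ x ∈ C ↔ x ∈ C) :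
    #((R ×ˢ C).filter (fun p => ((π * τ) p.1, (π * τ) p.2) ∈ E))
      = #((R ×ˢ C).filter (fun p => (π p.1, π p.2) ∈ E)) :=
  card_filter_comp_eq _ (Equiv.prodCongr τ τ) (by simp [hR, hC]) (fun p => (π p.1, π p.2) ∈ E)

theorem card_filter_block_mem_eq [Fintype α] (E : Finset (α × α)) {R C : Finset α}
    (hRC : Disjoint R C) (k : ℕ) {i j a b : α} (hij : (i, j) ∈ R ×ˢ C)
    (hab : (a, b) ∈ R ×ˢ C) :
    #((univ.filter (fun π : Equiv.Perm α =>
        #((R ×ˢ C).filter (fun p => (π p.1, π p.2) ∈ E)) = k)).filter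
        (fun π => (π a, π b) ∈ E))
      = #((univ.filter (fun π : Equiv.Perm α =>
        #((R ×ˢ C).filter (fun p => (π p.1, π p.2) ∈ E)) = k)).filter
        (fun π => (π i, π j) ∈ E)) := by
  obtain ⟨hi, hj⟩ := mem_product.mp hij
  obtain ⟨ha, hb⟩ := mem_product.mp hab
  obtain ⟨τ, hτi, hτj, hR, hC⟩ := exists_perm_block_invariant hRC hi ha hj hb
  refine card_equiv (Equiv.mulRight τ) fun π => ?_
  simp only [mem_filter, mem_univ, true_and, Equiv.coe_mulRight]
  rw [card_block_filter_mul_eq E π τ hR hC]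
  simp only [Equiv.Perm.mul_apply, hτi, hτj]

end Block

/-- For a block `B = R × C` (with `R`, `C` disjoint) and a uniformly random relabeling
`E₂ = π(E)` of a fixed edge set `E`, conditional on `|B ∩ E₂| = k`, each pair `(i,j) ∈ B`
lies in `E₂` with probability exactly `k/|B|`. (Probabilities are expressed as counts of
permutations.) -/
theorem stmt12 (n : ℕ) (E : Finset (Fin n × Fin n)) (R C : Finset (Fin n))
    (hRC : Disjoint R C) (k : ℕ) (i j : Fin n) (hij : (i, j) ∈ R ×ˢ C)
    (hpos : (Finset.univ.filter (fun π : Equiv.Perm (Fin n) =>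
        ((R ×ˢ C).filter (fun p => (π p.1, π p.2) ∈ E)).card = k)).Nonempty) :
    ((Finset.univ.filter (fun π : Equiv.Perm (Fin n) =>
        ((R ×ˢ C).filter (fun p => (π p.1, π p.2) ∈ E)).card = k ∧ (π i, π j) ∈ E)).card : ℝ)
      / ((Finset.univ.filter (fun π : Equiv.Perm (Fin n) =>
        ((R ×ˢ C).filter (fun p => (π p.1, π p.2) ∈ E)).card = k)).card : ℝ)
      = (k : ℝ) / ((R ×ˢ C).card : ℝ) := by
  rw [← filter_filter]
  -- `(… :)` elaborates the term before unifying it with the goal; the other order times out.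
  exact (card_filter_div_card_eq_of_card_filter_eq _ (R ×ˢ C) (fun π p => (π p.1, π p.2) ∈ E) k
    hij hpos (fun π hπ => (mem_filter.mp hπ).2)
    fun ⟨_, _⟩ hab => card_filter_block_mem_eq E hRC k hij hab :)
end

section
/- Let X ∈ [0,1]^{n×n} be a matrix whose every column is monotone (non-increasing in the row index), let r(X) ∈ ℝ^n denote its vector of row sums, let r̂ ∈ [0,n]^n be any vector, and let t ∈ [0,n]. Partition the row indices into groups so that within each group the values of r̂ differ by at most t (a 'blocking' of r̂ at resolution t), and let R(X) be the matrix obtained by replacing each row of X with the average of the rows in its group. Then ‖X − R(X)‖_F² ≤ nt + 2‖r̂ − r(X)‖₁. -/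
open Finset

private lemma stmt14_double_count (n : ℕ) (g : Fin n → Fin n) (d : Fin n → ℝ) :
    ∑ i, (∑ l ∈ Finset.univ.filter (fun l => g l = g i), d l) /
        ((Finset.univ.filter (fun l => g l = g i)).card : ℝ) = ∑ l, d l := by
  have hmem : ∀ i : Fin n, i ∈ Finset.univ.filter (fun l => g l = g i) := by
    intro i; simp
  have hcard : ∀ i : Fin n, (0:ℝ) < ((Finset.univ.filter (fun l => g l = g i)).card : ℝ) := by
    intro i
    exact_mod_cast Finset.card_pos.mpr ⟨i, hmem i⟩
  have hSeq : ∀ i l : Fin n, g l = g i →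
      (Finset.univ.filter (fun x => g x = g i)) = (Finset.univ.filter (fun x => g x = g l)) := by
    intro i l h
    apply Finset.filter_congr
    intro x _
    rw [h]
  calc ∑ i, (∑ l ∈ Finset.univ.filter (fun l => g l = g i), d l) /
        ((Finset.univ.filter (fun l => g l = g i)).card : ℝ)
      = ∑ i, ∑ l, (if g l = g i then d l /
          ((Finset.univ.filter (fun x => g x = g i)).card : ℝ) else 0) := by
        refine Finset.sum_congr rfl fun i _ => ?_
        rw [Finset.sum_div, Finset.sum_filter]
    _ = ∑ l, ∑ i, (if g l = g i then d l /
          ((Finset.univ.filter (fun x => g x = g i)).card : ℝ) else 0) := Finset.sum_comm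
    _ = ∑ l, ∑ i, (if g l = g i then d l /
          ((Finset.univ.filter (fun x => g x = g l)).card : ℝ) else 0) := by
        refine Finset.sum_congr rfl fun l _ => Finset.sum_congr rfl fun i _ => ?_
        by_cases h : g l = g i
        · simp only [h, if_true, hSeq i l h]
        · simp [h]
    _ = ∑ l, d l := by
        refine Finset.sum_congr rfl fun l _ => ?_
        rw [← Finset.sum_filter]
        have : (Finset.univ.filter (fun i => g l = g i)) =
            (Finset.univ.filter (fun i => g i = g l)) := by
          apply Finset.filter_congr; intro x _; simp [eq_comm]
        have hne : (((Finset.univ.filter (fun i => g i = g l)).card : ℝ)) ≠ 0 := by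
          have : l ∈ Finset.univ.filter (fun i => g i = g l) := by simp
          exact_mod_cast (Finset.card_pos.mpr ⟨l, this⟩).ne'
        rw [this, Finset.sum_const, nsmul_eq_mul, mul_comm, div_mul_cancel₀ _ hne]

/-- Blocking approximation lemma: if `X ∈ [0,1]^{n×n}` has columns non-increasing in the row
index, and rows are grouped so that within each group the estimated scores `rhat` differ by at
most `t`, then replacing each row by its group average incurs squared Frobenius error at most
`nt + 2‖rhat − r(X)‖₁`, where `r(X)` is the vector of row sums. -/
theorem stmt14 (n : ℕ) (X : Fin n → Fin n → ℝ)
    (hX01 : ∀ i j, X i j ∈ Set.Icc (0 : ℝ) 1)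
    (hmono : ∀ j : Fin n, ∀ k l : Fin n, k ≤ l → X l j ≤ X k j)
    (rhat : Fin n → ℝ) (hrhat : ∀ i, rhat i ∈ Set.Icc (0 : ℝ) (n : ℝ))
    (t : ℝ) (ht : t ∈ Set.Icc (0 : ℝ) (n : ℝ))
    (g : Fin n → Fin n)
    (hg : ∀ i j, g i = g j → |rhat i - rhat j| ≤ t) :
    ∑ i, ∑ j, (X i j -
        (∑ l ∈ Finset.univ.filter (fun l => g l = g i), X l j) /
          ((Finset.univ.filter (fun l => g l = g i)).card : ℝ)) ^ 2
      ≤ (n : ℝ) * t + 2 * ∑ i, |rhat i - ∑ j, X i j| := by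
  set S : Fin n → Finset (Fin n) := fun i => Finset.univ.filter (fun l => g l = g i) with hS
  set m : Fin n → ℝ := fun i => ((S i).card : ℝ) with hm
  set r : Fin n → ℝ := fun i => ∑ j, X i j with hr
  set d : Fin n → ℝ := fun i => |rhat i - r i| with hd
  have hmem : ∀ i : Fin n, i ∈ S i := by intro i; simp [hS]
  have hcard : ∀ i : Fin n, (0:ℝ) < m i := by
    intro i
    have : 0 < (S i).card := Finset.card_pos.mpr ⟨i, hmem i⟩
    simpa [hm] using (Nat.cast_pos (α := ℝ)).mpr this
  -- avg entry in [0,1]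
  have havg : ∀ i j, (∑ l ∈ S i, X l j) / m i ∈ Set.Icc (0:ℝ) 1 := by
    intro i j
    constructor
    · apply div_nonneg _ (hcard i).le
      exact Finset.sum_nonneg fun l _ => (hX01 l j).1
    · rw [div_le_one (hcard i)]
      calc ∑ l ∈ S i, X l j ≤ ∑ l ∈ S i, 1 :=
            Finset.sum_le_sum fun l _ => (hX01 l j).2
        _ = m i := by simp [hm]
  -- per-pair row l1 bound
  have hpair : ∀ i l : Fin n, ∑ j, |X i j - X l j| = |r i - r l| := by
    intro i l
    rcases le_total i l with h | h
    · have h1 : ∀ j, |X i j - X l j| = X i j - X l j := fun j =>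
        abs_of_nonneg (by linarith [hmono j i l h])
      simp only [h1, Finset.sum_sub_distrib]
      rw [abs_of_nonneg]
      exact sub_nonneg.mpr (Finset.sum_le_sum fun j _ => hmono j i l h)
    · have h1 : ∀ j, |X i j - X l j| = X l j - X i j := fun j => by
        rw [abs_sub_comm]; exact abs_of_nonneg (by linarith [hmono j l i h])
      simp only [h1, Finset.sum_sub_distrib]
      rw [abs_sub_comm, abs_of_nonneg]
      exact sub_nonneg.mpr (Finset.sum_le_sum fun j _ => hmono j l i h)
  have key : ∀ i : Fin n, ∑ j, (X i j - (∑ l ∈ S i, X l j) / m i) ^ 2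
      ≤ (∑ l ∈ S i, (d i + t + d l)) / m i := by
    intro i
    have step1 : ∀ j, (X i j - (∑ l ∈ S i, X l j) / m i) ^ 2
        ≤ |X i j - (∑ l ∈ S i, X l j) / m i| := by
      intro j
      set x := X i j - (∑ l ∈ S i, X l j) / m i with hx
      have h1 : |x| ≤ 1 := by
        have := hX01 i j; have := havg i j
        rw [abs_le]; constructor <;> [skip; skip] <;>
          simp only [hx] <;> obtain ⟨a1, a2⟩ := hX01 i j <;>
          obtain ⟨b1, b2⟩ := havg i j <;> linarith
      nlinarith [sq_abs x, abs_nonneg x]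
    have step2 : ∀ j, |X i j - (∑ l ∈ S i, X l j) / m i|
        ≤ (∑ l ∈ S i, |X i j - X l j|) / m i := by
      intro j
      have heq : X i j - (∑ l ∈ S i, X l j) / m i
          = (∑ l ∈ S i, (X i j - X l j)) / m i := by
        rw [Finset.sum_sub_distrib, Finset.sum_const, nsmul_eq_mul, sub_div]
        congr 1
        have hne : ((S i).card : ℝ) ≠ 0 := ne_of_gt (hcard i)
        rw [mul_div_cancel_left₀ _ hne]
      rw [heq, abs_div, abs_of_pos (hcard i)]
      gcongr
      exact Finset.abs_sum_le_sum_abs _ _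
    calc ∑ j, (X i j - (∑ l ∈ S i, X l j) / m i) ^ 2
        ≤ ∑ j, (∑ l ∈ S i, |X i j - X l j|) / m i :=
          Finset.sum_le_sum fun j _ => (step1 j).trans (step2 j)
      _ = (∑ l ∈ S i, ∑ j, |X i j - X l j|) / m i := by
          rw [← Finset.sum_div, Finset.sum_comm]
      _ ≤ (∑ l ∈ S i, (d i + t + d l)) / m i := by
          gcongr with l hl
          rw [hpair i l]
          have hgl : g l = g i := by simpa [hS] using hl
          have h1 : |rhat i - rhat l| ≤ t := hg i l hgl.symm
          have h2 : |r i - r l| ≤ |rhat i - r i| + |rhat i - rhat l| + |rhat l - r l| := by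
            rw [abs_sub_comm (rhat i) (r i)]
            calc |r i - r l| = |(r i - rhat i) + (rhat i - rhat l) + (rhat l - r l)| := by
                  ring_nf
              _ ≤ _ := by
                  refine (abs_add_le _ _).trans (add_le_add ?_ le_rfl)
                  exact abs_add_le _ _
          simp only [hd]
          linarith
  calc ∑ i, ∑ j, (X i j - (∑ l ∈ S i, X l j) / m i) ^ 2
      ≤ ∑ i, (∑ l ∈ S i, (d i + t + d l)) / m i :=
        Finset.sum_le_sum fun i _ => key i
    _ = ∑ i, ((d i + t) + (∑ l ∈ S i, d l) / m i) := by
        refine Finset.sum_congr rfl fun i _ => ?_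
        have hne : ((S i).card : ℝ) ≠ 0 := ne_of_gt (hcard i)
        rw [Finset.sum_add_distrib, Finset.sum_const, nsmul_eq_mul, add_div,
          mul_div_cancel_left₀ _ hne]
    _ = (∑ i, (d i + t)) + ∑ i, (∑ l ∈ S i, d l) / m i := Finset.sum_add_distrib
    _ = (∑ i, d i + n * t) + ∑ i, d i := by
        rw [Finset.sum_add_distrib, Finset.sum_const, nsmul_eq_mul]
        congr 1
        · simp [Finset.card_univ]
        · exact stmt14_double_count n g d
    _ = (n : ℝ) * t + 2 * ∑ i, |rhat i - ∑ j, X i j| := by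
        simp only [hd, hr]
        ring
end

section
/- Let M be an n×n matrix with entries in [0,1] satisfying M_{ij} + M_{ji} = 1, whose rows are monotone when sorted by the true row-sum order, with row-sum (score) vector τ* (normalized by 1/(n−1)). Let π̂ be the permutation that sorts an estimated score vector τ̂ in decreasing order, and let π̂(M) denote M with rows and columns permuted accordingly. Then ∑_{i=1}^n ‖M_{π̂(i)} − M_i‖₁ ≤ 2(n−1)‖τ* − τ̂‖₁, where τ*_i = (1/(n−1))∑_{j≠i} M_{ij} and both (τ*_i) and (τ̂_{π̂^{-1}(i)}) are sorted in decreasing order. -/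
/-!
Since the columns of `M` are antitone, any two rows are comparable entrywise, so their
ℓ¹ distance is the difference of their row sums, i.e. `(n - 1) |τ*_a - τ*_b|`. The left-hand
side is therefore `(n - 1) ∑ |τ*_{π̂ i} - τ*_i|`. Going through `τ̂_i` by the triangle inequality
leaves `∑ |τ*_{π̂ i} - τ̂_i|`, which compares the sorted sequence `τ*` with the sorted
sequence `τ̂ ∘ π̂⁻¹`; as `|x - z|` has the Monge property for sorted `x`, `z`, pairing sorted
sequences in order minimizes the ℓ¹ distance, so this is at most `‖τ* - τ̂‖₁`.
-/

open Finset Equiv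

section Monge

variable {ι α : Type*} [Fintype ι] [LinearOrder ι]
  [AddCommMonoid α] [PartialOrder α] [IsOrderedAddMonoid α]

/- With `i` the least point moved by `σ`, composing with a swap fixes `i`; the Monge inequality
for `i ≤ σ⁻¹ i` and `i ≤ σ i` shows that this does not increase the cost. -/
lemma exists_card_support_lt_and_sum_comp_perm_le {f : ι → ι → α}
    (hf : ∀ i j k l, i ≤ j → k ≤ l → f i k + f j l ≤ f i l + f j k)
    {σ : Perm ι} (hσ : σ.support.Nonempty) :
    ∃ τ : Perm ι, #τ.support < #σ.support ∧ ∑ i, f i (τ i) ≤ ∑ i, f i (σ i) := by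
  set i := σ.support.min' hσ
  set a := σ.symm i
  have hi : σ i ≠ i := Perm.mem_support.mp (σ.support.min'_mem hσ)
  have hσa : σ a = i := σ.apply_symm_apply i
  have hai : a ≠ i := fun h => hi (by rw [← h, hσa, h])
  have hi_le_σi : i ≤ σ i :=
    σ.support.min'_le _ (Perm.apply_mem_support.mpr (σ.support.min'_mem hσ))
  have hi_le_a : i ≤ a :=
    σ.support.min'_le _ (Perm.mem_support.mpr (by rw [hσa]; exact hai.symm))
  refine ⟨swap i (σ i) * σ, Perm.card_support_swap_mul hi, ?_⟩
  have hτ : ∀ j ∉ ({i, a} : Finset ι), (swap i (σ i) * σ) j = σ j := fun j hj => by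
    simp only [mem_insert, mem_singleton, not_or] at hj
    refine swap_apply_of_ne_of_ne (fun h => hj.2 ?_) (fun h => hj.1 (σ.injective h))
    rw [← hσa] at h
    exact σ.injective h
  rw [← sum_add_sum_compl {i, a}, ← sum_add_sum_compl {i, a} (fun j => f j (σ j)),
    sum_pair hai.symm, sum_pair hai.symm,
    sum_congr rfl fun j hj => by rw [hτ j (mem_compl.mp hj)]]
  simp only [Perm.mul_apply, swap_apply_left, swap_apply_right, hσa]
  exact add_le_add_left (hf i a i (σ i) hi_le_a hi_le_σi) _

theorem sum_le_sum_comp_perm_of_monge {f : ι → ι → α}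
    (hf : ∀ i j k l, i ≤ j → k ≤ l → f i k + f j l ≤ f i l + f j k) (σ : Perm ι) :
    ∑ i, f i i ≤ ∑ i, f i (σ i) := by
  induction hk : #σ.support using Nat.strong_induction_on generalizing σ with
  | _ k ih =>
    rcases σ.support.eq_empty_or_nonempty with hσ | hσ
    · simp [Perm.support_eq_empty_iff.mp hσ]
    · obtain ⟨τ, hτσ, hτ⟩ := exists_card_support_lt_and_sum_comp_perm_le hf hσ
      exact (ih _ (hk ▸ hτσ) τ rfl).trans hτ

end Monge

section AbsSub

variable {G : Type*} [AddCommGroup G] [LinearOrder G] [IsOrderedAddMonoid G]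

lemma abs_sub_add_abs_sub_le_abs_sub_add_abs_sub {p q r s : G} (hrp : r ≤ p) (hsq : s ≤ q) :
    |p - q| + |r - s| ≤ |p - s| + |r - q| := by
  grind [abs_cases]

theorem sum_abs_sub_eq_abs_sum_sub_sum {ι : Type*} [Fintype ι] {f g : ι → G}
    (h : g ≤ f ∨ f ≤ g) : ∑ i, |f i - g i| = |∑ i, f i - ∑ i, g i| := by
  wlog hgf : g ≤ f generalizing f g
  · simpa only [abs_sub_comm] using this h.symm (h.resolve_left hgf)
  rw [← sum_sub_distrib, abs_sum_of_nonneg' fun i => sub_nonneg.mpr (hgf i)]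
  exact sum_congr rfl fun i _ => abs_of_nonneg (sub_nonneg.mpr (hgf i))

variable {ι : Type*} [Fintype ι] [LinearOrder ι]

theorem sum_abs_sub_comp_perm_le_of_antitone {x y : ι → G} (hx : Antitone x) (σ : Perm ι)
    (hy : Antitone (y ∘ σ.symm)) :
    ∑ i, |x (σ i) - y i| ≤ ∑ i, |x i - y i| := by
  calc ∑ i, |x (σ i) - y i| = ∑ i, |x i - (y ∘ σ.symm) i| :=
        (σ.symm.sum_comp _).symm.trans (by simp)
    _ ≤ ∑ i, |x i - (y ∘ σ.symm) (σ i)| :=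
        sum_le_sum_comp_perm_of_monge (f := fun i k => |x i - (y ∘ σ.symm) k|)
          (fun _ _ _ _ hij hkl => abs_sub_add_abs_sub_le_abs_sub_add_abs_sub (hx hij) (hy hkl)) σ
    _ = ∑ i, |x i - y i| := by simp

theorem sum_abs_sub_comp_perm_le_two_mul {x y : ι → G} (hx : Antitone x) (σ : Perm ι)
    (hy : Antitone (y ∘ σ.symm)) :
    ∑ i, |x (σ i) - x i| ≤ 2 • ∑ i, |x i - y i| := by
  calc ∑ i, |x (σ i) - x i| ≤ ∑ i, (|x (σ i) - y i| + |x i - y i|) :=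
        sum_le_sum fun i _ => by simpa only [abs_sub_comm (y i)] using abs_sub_le _ (y i) _
    _ ≤ 2 • ∑ i, |x i - y i| := by
        rw [sum_add_distrib, two_nsmul]
        exact add_le_add_left (sum_abs_sub_comp_perm_le_of_antitone hx σ hy) _

end AbsSub

theorem stmt15_general (n : ℕ) (hn : 2 ≤ n) (M : Fin n → Fin n → ℝ)
    (hskew : ∀ i j, M i j + M j i = 1)
    (hcol : ∀ j : Fin n, ∀ a b : Fin n, a ≤ b → M b j ≤ M a j)
    (tstar that : Fin n → ℝ)
    (htstar : ∀ i, tstar i =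
      (1 / ((n : ℝ) - 1)) * ∑ j ∈ Finset.univ.filter (fun j => j ≠ i), M i j)
    (pihat : Equiv.Perm (Fin n))
    (hsort : ∀ a b : Fin n, a ≤ b → that (pihat.symm b) ≤ that (pihat.symm a)) :
    ∑ i, ∑ j, |M (pihat i) j - M i j| ≤
      2 * ((n : ℝ) - 1) * ∑ i, |tstar i - that i| := by
  have hn1 : (0 : ℝ) < n - 1 := by
    have : (2 : ℝ) ≤ n := by exact_mod_cast hn
    linarith
  have hrow : ∀ i, ∑ j, M i j = (n - 1) * tstar i + 1 / 2 := fun i => by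
    have hdiag : M i i = 1 / 2 := by linarith [hskew i i]
    rw [← add_sum_erase _ _ (mem_univ i), ← filter_ne', htstar i, hdiag]
    field_simp
    ring
  have hrows_le : ∀ a b : Fin n, a ≤ b → M b ≤ M a := fun a b hab j => hcol j a b hab
  have hanti : Antitone tstar := fun a b hab => by
    have := sum_le_sum fun j (_ : j ∈ univ) => hrows_le a b hab j
    rw [hrow, hrow] at this
    exact le_of_mul_le_mul_left (by linarith) hn1
  have hdist : ∀ a b, ∑ j, |M a j - M b j| = (n - 1) * |tstar a - tstar b| := fun a b => by
    rw [sum_abs_sub_eq_abs_sum_sub_sum ((le_total a b).imp (hrows_le a b) (hrows_le b a)),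
      hrow, hrow, add_sub_add_right_eq_sub, ← mul_sub, abs_mul, abs_of_pos hn1]
  calc ∑ i, ∑ j, |M (pihat i) j - M i j| = (n - 1) * ∑ i, |tstar (pihat i) - tstar i| := by
        simp_rw [hdist, mul_sum]
    _ ≤ (n - 1) * (2 • ∑ i, |tstar i - that i|) :=
        mul_le_mul_of_nonneg_left (sum_abs_sub_comp_perm_le_two_mul hanti pihat hsort) hn1.le
    _ = 2 * (n - 1) * ∑ i, |tstar i - that i| := by rw [two_nsmul]; ring

/-- For an SST matrix `M` (entries in `[0,1]`, skew-complementary, columns monotone in the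
true order, taken to be the identity), scores `τ*` given by normalized row sums, and a
permutation `π̂` sorting the estimated scores `τ̂` in decreasing order,
`∑ i ‖M_{π̂(i)} − M_i‖₁ ≤ 2(n−1)‖τ* − τ̂‖₁`. -/
theorem stmt15 (n : ℕ) (hn : 2 ≤ n) (M : Fin n → Fin n → ℝ)
    (h01 : ∀ i j, M i j ∈ Set.Icc (0 : ℝ) 1)
    (hskew : ∀ i j, M i j + M j i = 1)
    (hcol : ∀ j : Fin n, ∀ a b : Fin n, a ≤ b → M b j ≤ M a j)
    (tstar that : Fin n → ℝ)
    (htstar : ∀ i, tstar i =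
      (1 / ((n : ℝ) - 1)) * ∑ j ∈ Finset.univ.filter (fun j => j ≠ i), M i j)
    (pihat : Equiv.Perm (Fin n))
    (hsort : ∀ a b : Fin n, a ≤ b → that (pihat.symm b) ≤ that (pihat.symm a)) :
    ∑ i, ∑ j, |M (pihat i) j - M i j| ≤
      2 * ((n : ℝ) - 1) * ∑ i, |tstar i - that i| :=
  stmt15_general n hn M hskew hcol tstar that htstar pihat hsort
end
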